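/- arXiv:math/0503032 — 2 statements merged into one kernel-verified Lean document; each statement's English description precedes it below -/
import Mathlib

section
/- Suppose 0 < β < n, 1 ≤ r < p < n/β and 1/q = 1/p − β/n. Then there is a constant C such that ‖M_{β,r}(f)‖_{L^q(R^n)} ≤ C ‖f‖_{L^p(R^n)} for all f ∈ L^p(R^n). -/
open MeasureTheory ENNReal

noncomputable section

/-- Euclidean space `ℝⁿ`. -/
abbrev En (n : ℕ) := EuclideanSpace ℝ (Fin n)

/-- The closed cube with center `c` and side length `s`, sides parallel to the axes. -/
def cube {n : ℕ} (c : En n) (s : ℝ) : Set (En n) := {y : En n | ∀ i, |y i - c i| ≤ s / 2}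

/-- The average of `b` over the cube `Q(c, s)`. -/
def cubeAvg {n : ℕ} (b : En n → ℝ) (c : En n) (s : ℝ) : ℝ :=
  (volume (cube c s)).toReal⁻¹ * ∫ y in cube c s, b y

/-- `B` is an upper bound for the BMO norm of `b`. -/
def BMOBound {n : ℕ} (b : En n → ℝ) (B : ℝ) : Prop :=
  ∀ (c : En n) (s : ℝ), 0 < s →
    ∫ y in cube c s, |b y - cubeAvg b c s| ≤ B * (volume (cube c s)).toReal

/-- `B` is an admissible `BMO_φ` constant for `b`:
`|Q(c,s)|⁻¹ ∫_{Q(c,s)} |b − b_Q| ≤ B φ(s)` for every cube. -/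
def BMOphiBound {n : ℕ} (φ : ℝ → ℝ) (b : En n → ℝ) (B : ℝ) : Prop :=
  ∀ (c : En n) (s : ℝ), 0 < s →
    ∫ y in cube c s, |b y - cubeAvg b c s| ≤ B * φ s * (volume (cube c s)).toReal

/-- `L` is an upper bound for the `Lip_β` seminorm of `b`. -/
def LipBound {n : ℕ} (β : ℝ) (b : En n → ℝ) (L : ℝ) : Prop :=
  ∀ x y : En n, |b x - b y| ≤ L * ‖x - y‖ ^ β

/-- First-order partial derivative in the `i`-th coordinate direction. -/
def pderivFun {n : ℕ} (i : Fin n) (f : En n → ℝ) : En n → ℝ :=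
  fun x => fderiv ℝ f x (EuclideanSpace.single i 1)

/-- Iterated partial derivative `D^α f` for a multi-index `α`. -/
def iterPDeriv {n : ℕ} (α : Fin n → ℕ) (f : En n → ℝ) : En n → ℝ :=
  ((List.finRange n).foldr (fun i g => (pderivFun i)^[α i] ∘ g) id) f

/-- `g` is the distributional (weak) derivative `D^α A`. -/
def IsWeakDeriv {n : ℕ} (α : Fin n → ℕ) (A g : En n → ℝ) : Prop :=
  ∀ φ : En n → ℝ, ContDiff ℝ (⊤ : ℕ∞) φ → HasCompactSupport φ →
    ∫ x, A x * iterPDeriv α φ x = (-1 : ℝ) ^ (∑ i, α i) * ∫ x, g x * φ x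

/-- The Taylor remainder `R_m(A; x, y) = A(x) − ∑_{|α| ≤ m−1} (1/α!) D^α A(y) (x−y)^α`,
where `DA α` denotes `D^α A`. -/
def Rm {n : ℕ} (m : ℕ) (A : En n → ℝ) (DA : (Fin n → ℕ) → En n → ℝ) (x y : En n) : ℝ :=
  A x - ∑ k ∈ Finset.range m, ∑ α ∈ Finset.Nat.antidiagonalTuple n k,
    ((∏ i, Nat.factorial (α i) : ℕ) : ℝ)⁻¹ * DA α y * ∏ i, (x i - y i) ^ α i

/-- The multilinear operator `T^A f(x) = ∫ (R_{m+1}(A;x,y)/|x−y|^m) K(x,y) f(y) dy`. -/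
def TA {n : ℕ} (m : ℕ) (A : En n → ℝ) (DA : (Fin n → ℕ) → En n → ℝ)
    (K : En n → En n → ℝ) (f : En n → ℝ) (x : En n) : ℝ :=
  ∫ y, Rm (m + 1) A DA x y / ‖x - y‖ ^ m * (K x y * f y)

/-- The integral operator `T f(x) = ∫ K(x,y) f(y) dy`. -/
def Tint {n : ℕ} (K : En n → En n → ℝ) (f : En n → ℝ) (x : En n) : ℝ := ∫ y, K x y * f y

/-- A bounded, measurable, compactly supported function. -/
def NiceFun {n : ℕ} (f : En n → ℝ) : Prop :=
  Measurable f ∧ HasCompactSupport f ∧ ∃ M : ℝ, ∀ x, |f x| ≤ M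

/-- The Orlicz "norm" `‖f‖_{L_ψ} = inf_{λ>0} λ⁻¹ (1 + ∫ ψ(λ|f|))`. -/
def orliczNorm {n : ℕ} (ψ : ℝ → ℝ) (f : En n → ℝ) : ℝ≥0∞ :=
  ⨅ (l : ℝ) (_ : 0 < l),
    ENNReal.ofReal l⁻¹ * (1 + ∫⁻ x, ENNReal.ofReal (ψ (l * |f x|)))

/-- The fractional maximal function
`M_{δ,r} f(x) = sup_{Q ∋ x} (|Q|^{−(1−rδ/n)} ∫_Q |f|^r)^{1/r}`. -/
def Mfrac {n : ℕ} (δ r : ℝ) (f : En n → ℝ) (x : En n) : ℝ≥0∞ :=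
  ⨆ (c : En n) (s : ℝ) (_ : 0 < s ∧ x ∈ cube c s),
    (((volume (cube c s)) ^ (1 - r * δ / n))⁻¹ *
      ∫⁻ y in cube c s, (ENNReal.ofReal |f y|) ^ r) ^ (1 / r)

/-- The sharp maximal function `g♯(x) = sup_{Q ∋ x} |Q|⁻¹ ∫_Q |g − g_Q|`. -/
def sharpFn {n : ℕ} (g : En n → ℝ) (x : En n) : ℝ≥0∞ :=
  ⨆ (c : En n) (s : ℝ) (_ : 0 < s ∧ x ∈ cube c s),
    (volume (cube c s))⁻¹ * ∫⁻ y in cube c s, ENNReal.ofReal |g y - cubeAvg g c s|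

/-- The distribution function `m_g(s) = |{x : |g(x)| > s}|`. -/
def distrib {n : ℕ} (g : En n → ℝ) (s : ℝ) : ℝ≥0∞ := volume {x : En n | s < |g x|}


section AuxFrac
open Set Metric
namespace Frac

variable {n : ℕ}

/-- Ball-based fractional maximal function. -/
def MB (δ : ℝ) (g : En n → ℝ≥0∞) (x : En n) : ℝ≥0∞ :=
  ⨆ (c : En n) (t : ℝ) (_ : x ∈ Metric.ball c t),
    (volume (Metric.ball c t)) ^ (δ / (n : ℝ) - 1) * ∫⁻ y in Metric.ball c t, g y

lemma le_MB {δ : ℝ} {g : En n → ℝ≥0∞} {x c : En n} {t : ℝ} (hx : x ∈ Metric.ball c t) :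
    (volume (Metric.ball c t)) ^ (δ / (n : ℝ) - 1) * ∫⁻ y in Metric.ball c t, g y
      ≤ MB δ g x := by
  refine le_trans ?_ (le_iSup _ c)
  refine le_trans ?_ (le_iSup _ t)
  exact le_iSup (fun _ : x ∈ Metric.ball c t =>
    (volume (Metric.ball c t)) ^ (δ / (n : ℝ) - 1) * ∫⁻ y in Metric.ball c t, g y) hx

lemma MB_le {δ : ℝ} {g : En n → ℝ≥0∞} {x : En n} {M : ℝ≥0∞}
    (h : ∀ c t, x ∈ Metric.ball c t →
      (volume (Metric.ball c t)) ^ (δ / (n : ℝ) - 1) * (∫⁻ y in Metric.ball c t, g y) ≤ M) :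
    MB δ g x ≤ M := by
  refine iSup_le fun c => iSup_le fun t => iSup_le fun hx => h c t hx

lemma measurable_MB (δ : ℝ) (g : En n → ℝ≥0∞) : Measurable (MB δ g) := by
  apply LowerSemicontinuous.measurable
  intro x y hy
  rcases lt_iSup_iff.mp hy with ⟨c, hc⟩
  rcases lt_iSup_iff.mp hc with ⟨t, ht⟩
  rcases lt_iSup_iff.mp ht with ⟨hx, hlt⟩
  have hball : IsOpen (Metric.ball c t) := isOpen_ball
  filter_upwards [hball.mem_nhds hx] with z hz
  exact lt_of_lt_of_le hlt (le_MB hz)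

lemma MB_mono {δ : ℝ} {g h : En n → ℝ≥0∞} (hgh : ∀ y, g y ≤ h y) (x : En n) :
    MB δ g x ≤ MB δ h x := by
  refine MB_le fun c t hx => le_trans ?_ (le_MB hx)
  exact mul_le_mul_right (lintegral_mono fun y => hgh y) _

/-- nontrivial -/
lemma nontriv (hn : 0 < n) : Nontrivial (En n) := by
  refine ⟨0, EuclideanSpace.single ⟨0, hn⟩ 1, fun h => ?_⟩
  have h0 := congrArg (fun v : En n => v ⟨0, hn⟩) h
  simp [EuclideanSpace.single_apply] at h0

lemma vol_ball (hn : 0 < n) (c : En n) {t : ℝ} (ht : 0 ≤ t) :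
    volume (Metric.ball c t)
      = ENNReal.ofReal (t ^ n) * volume (Metric.ball (0 : En n) 1) := by
  haveI := nontriv hn
  rcases eq_or_lt_of_le ht with h | h
  · simp [← h, Real.zero_rpow, hn.ne', Metric.ball_eq_empty.2 (le_refl (0:ℝ))]
  · rw [Measure.addHaar_ball volume c h.le, finrank_euclideanSpace_fin]

lemma vol_closedBall (hn : 0 < n) (c : En n) {t : ℝ} (ht : 0 ≤ t) :
    volume (Metric.closedBall c t)
      = ENNReal.ofReal (t ^ n) * volume (Metric.ball (0 : En n) 1) := by
  haveI := nontriv hn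
  rw [Measure.addHaar_closedBall volume c ht, finrank_euclideanSpace_fin]

/-- volume facts -/
lemma vol_ball_pos (hn : 0 < n) {c : En n} {t : ℝ} (ht : 0 < t) :
    0 < volume (Metric.ball c t) := by
  haveI : Nontrivial (En n) := by
    refine ⟨0, EuclideanSpace.single ⟨0, hn⟩ 1, fun h => ?_⟩
    have h0 := congrArg (fun v : En n => v ⟨0, hn⟩) h
    simp [EuclideanSpace.single_apply] at h0
  exact measure_ball_pos volume c ht

end Frac

namespace Frac2
open Frac

lemma weak {n : ℕ} (hn : 0 < n) (g : En n → ℝ≥0∞) (hg : Measurable g)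
    {lam : ℝ≥0∞} (h0 : lam ≠ 0) (htop : lam ≠ ∞) :
    volume {x : En n | lam < MB 0 g x}
      ≤ ENNReal.ofReal (4 ^ n) / lam * ∫⁻ y, g y := by
  classical
  set I := ∫⁻ y, g y with hI
  have hc0 : ENNReal.ofReal (4 ^ n) / lam ≠ 0 := by
    rw [ENNReal.div_eq_inv_mul]
    refine mul_ne_zero (ENNReal.inv_ne_zero.mpr htop) ?_
    simp only [ne_eq, ENNReal.ofReal_eq_zero, not_le]
    positivity
  by_cases hItop : I = ∞
  · rw [hItop, ENNReal.mul_top hc0]; exact le_top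
  set v₁ := volume (Metric.ball (0 : En n) 1) with hv₁
  have hv₁0 : v₁ ≠ 0 := (measure_ball_pos volume _ one_pos).ne'
  have hv₁top : v₁ ≠ ∞ := measure_ball_lt_top.ne
  set E := {x : En n | lam < MB 0 g x} with hE
  have key : ∀ x, x ∈ E → ∃ c : En n, ∃ t : ℝ, (0 < t ∧ x ∈ Metric.ball c t) ∧
      lam * volume (Metric.ball c t) < ∫⁻ y in Metric.ball c t, g y := by
    intro x hx
    rw [hE, mem_setOf_eq, MB, lt_iSup_iff] at hx
    obtain ⟨c, hc⟩ := hx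
    rw [lt_iSup_iff] at hc
    obtain ⟨t, ht⟩ := hc
    rw [lt_iSup_iff] at ht
    obtain ⟨hxt, hlt⟩ := ht
    have ht0 : 0 < t := lt_of_le_of_lt dist_nonneg (mem_ball.mp hxt)
    set V := volume (Metric.ball c t) with hV
    have hV0 : V ≠ 0 := (vol_ball_pos hn ht0).ne'
    have hVtop : V ≠ ∞ := measure_ball_lt_top.ne
    refine ⟨c, t, ⟨ht0, hxt⟩, ?_⟩
    have he : ((0 : ℝ) / (n : ℝ) - 1) = (-1 : ℝ) := by ring
    rw [he, ENNReal.rpow_neg_one] at hlt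
    have := ENNReal.mul_lt_mul_left hV0 hVtop hlt
    calc lam * V = lam * V := rfl
      _ < V⁻¹ * (∫⁻ y in Metric.ball c t, g y) * V := this
      _ = ∫⁻ y in Metric.ball c t, g y := by
          rw [mul_comm, ← mul_assoc, ENNReal.mul_inv_cancel hV0 hVtop, one_mul]
  choose! c t hct hlt using key
  set J := (lam * v₁)⁻¹ * I with hJ
  have hJtop : J ≠ ∞ :=
    mul_ne_top (ENNReal.inv_ne_top.mpr (mul_ne_zero h0 hv₁0)) hItop
  have hR : ∀ x ∈ E, t x ≤ max 1 J.toReal := by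
    intro x hx
    have h1 : lam * v₁ * ENNReal.ofReal (t x ^ n) ≤ I := by
      have h2 := (hlt x hx).le
      rw [vol_ball hn _ (hct x hx).1.le] at h2
      calc lam * v₁ * ENNReal.ofReal (t x ^ n)
          = lam * (ENNReal.ofReal (t x ^ n) * v₁) := by ring
        _ ≤ I := h2.trans (setLIntegral_le_lintegral _ _)
    have h3 : ENNReal.ofReal (t x ^ n) ≤ J := by
      rw [hJ]
      calc ENNReal.ofReal (t x ^ n)
          = (lam * v₁)⁻¹ * (lam * v₁ * ENNReal.ofReal (t x ^ n)) := by
            rw [← mul_assoc, ENNReal.inv_mul_cancel (mul_ne_zero h0 hv₁0)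
              (mul_ne_top htop hv₁top), one_mul]
        _ ≤ (lam * v₁)⁻¹ * I := by gcongr
    have h4 : t x ^ n ≤ J.toReal :=
      (ENNReal.ofReal_le_iff_le_toReal hJtop).mp h3
    by_contra hcon
    push_neg at hcon
    have ht1 : (1 : ℝ) ≤ t x := (le_max_left _ _).trans hcon.le
    have : t x ≤ t x ^ n := le_self_pow₀ ht1 hn.ne'
    have : J.toReal < J.toReal :=
      lt_of_lt_of_le (lt_of_le_of_lt (le_max_right 1 J.toReal) hcon) (this.trans h4)
    exact absurd this (lt_irrefl _)
  obtain ⟨u, huE, hdisj, hcover⟩ :=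
    Vitali.exists_disjoint_subfamily_covering_enlargement_closedBall E c t
      (max 1 J.toReal) hR 4 (by norm_num)
  -- countability of u
  have hucnt : u.Countable := by
    have hps : Pairwise (Function.onFun Disjoint
        (fun b : u => Metric.closedBall (c b) (t b))) := by
      intro a b hab
      exact hdisj a.2 b.2 (Subtype.val_injective.ne hab)
    have := MeasureTheory.Measure.countable_meas_pos_of_disjoint_iUnion
      (μ := volume) (fun b : u => measurableSet_closedBall) hps
    have huniv : {i : u | 0 < volume (Metric.closedBall (c i) (t i))} = univ := by
      ext b
      simp only [mem_setOf_eq, mem_univ, iff_true]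
      exact measure_closedBall_pos volume _ (hct b (huE b.2)).1
    rw [huniv, Set.countable_univ_iff] at this
    exact Set.countable_coe_iff.mp this
  -- cover E
  have hcov : E ⊆ ⋃ b ∈ u, Metric.closedBall (c b) (4 * t b) := by
    intro x hx
    obtain ⟨b, hbu, hsub⟩ := hcover x hx
    exact Set.mem_biUnion hbu (hsub (Metric.ball_subset_closedBall (hct x hx).2))
  calc volume E ≤ volume (⋃ b ∈ u, Metric.closedBall (c b) (4 * t b)) :=
        measure_mono hcov
    _ ≤ ∑' b : u, volume (Metric.closedBall (c b) (4 * t b)) :=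
        measure_biUnion_le volume hucnt _
    _ ≤ ∑' b : u, ENNReal.ofReal (4 ^ n) *
          ((∫⁻ y in Metric.closedBall (c b) (t b), g y) / lam) := by
        refine ENNReal.tsum_le_tsum fun b => ?_
        have hb := huE b.2
        have ht0 := (hct b hb).1
        rw [vol_closedBall hn _ (by positivity : (0:ℝ) ≤ 4 * t b)]
        have : (4 * t b) ^ n = 4 ^ n * t b ^ n := by rw [mul_pow]
        rw [this, ENNReal.ofReal_mul (by positivity), mul_assoc,
          ← vol_ball hn (c b) ht0.le]
        refine mul_le_mul_right ?_ _
        rw [ENNReal.le_div_iff_mul_le (Or.inl h0) (Or.inl htop), mul_comm]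
        exact ((hlt b hb).le).trans
          (lintegral_mono_set Metric.ball_subset_closedBall)
    _ = ENNReal.ofReal (4 ^ n) / lam *
          ∑' b : u, ∫⁻ y in Metric.closedBall (c b) (t b), g y := by
        rw [ENNReal.tsum_mul_left]
        simp_rw [ENNReal.div_eq_inv_mul]
        rw [ENNReal.tsum_mul_left, ← mul_assoc, mul_comm (ENNReal.ofReal (4^n)) lam⁻¹]
    _ ≤ ENNReal.ofReal (4 ^ n) / lam * I := by
        refine mul_le_mul_right ?_ _
        haveI := hucnt.to_subtype
        rw [← lintegral_iUnion (fun b : u => measurableSet_closedBall)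
          (fun a b hab => hdisj a.2 b.2 (Subtype.val_injective.ne hab)) g]
        exact setLIntegral_le_lintegral _ _

end Frac2

namespace Frac3
open Frac Frac2

lemma MB_split {n : ℕ} (hn : 0 < n) (g : En n → ℝ≥0∞) (hg : Measurable g)
    (A : ℝ≥0∞) (x : En n) :
    MB 0 g x ≤ MB 0 (fun y => if A < g y then g y else 0) x + A := by
  refine MB_le fun c t hx => ?_
  have ht0 : 0 < t := lt_of_le_of_lt dist_nonneg (mem_ball.mp hx)
  set V := volume (Metric.ball c t) with hV
  have hV0 : V ≠ 0 := (vol_ball_pos hn ht0).ne'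
  have hVtop : V ≠ ∞ := measure_ball_lt_top.ne
  have he : ((0 : ℝ) / (n : ℝ) - 1) = (-1 : ℝ) := by ring
  rw [he, ENNReal.rpow_neg_one]
  set g₁ := fun y => if A < g y then g y else 0 with hg₁
  have hg₁m : Measurable g₁ :=
    Measurable.ite (measurableSet_lt measurable_const hg) hg measurable_const
  have hmono : ∀ y, g y ≤ g₁ y + A := by
    intro y
    by_cases h : A < g y
    · simp only [hg₁, if_pos h]; exact le_add_right le_rfl
    · simp only [hg₁, if_neg h]; push_neg at h; simpa using h
  have h1 : (∫⁻ y in Metric.ball c t, g y)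
      ≤ (∫⁻ y in Metric.ball c t, g₁ y) + A * V := by
    calc (∫⁻ y in Metric.ball c t, g y) ≤ ∫⁻ y in Metric.ball c t, (g₁ y + A) :=
          lintegral_mono hmono
      _ = (∫⁻ y in Metric.ball c t, g₁ y) + A * V := by
          rw [lintegral_add_right _ measurable_const, setLIntegral_const]
  calc V⁻¹ * ∫⁻ y in Metric.ball c t, g y
      ≤ V⁻¹ * ((∫⁻ y in Metric.ball c t, g₁ y) + A * V) := by gcongr
    _ = V⁻¹ * (∫⁻ y in Metric.ball c t, g₁ y) + A := by
        rw [mul_add]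
        congr 1
        rw [mul_comm A V, ← mul_assoc, ENNReal.inv_mul_cancel hV0 hVtop, one_mul]
    _ ≤ MB 0 g₁ x + A := by
        refine add_le_add_left ?_ A
        have := le_MB (δ := 0) (g := g₁) hx
        rwa [he, ENNReal.rpow_neg_one] at this

/-- ENNReal layer cake, inequality version. -/
lemma layer_le {α : Type*} [MeasurableSpace α] (μ : Measure α) (F : α → ℝ≥0∞)
    (hF : Measurable F) {s : ℝ} (hs : 1 < s) :
    ∫⁻ x, F x ^ s ∂μ ≤ ENNReal.ofReal s *
      ∫⁻ t in Set.Ioi (0 : ℝ), μ {a | ENNReal.ofReal t < F a} * ENNReal.ofReal (t ^ (s - 1)) := by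
  have hs0 : (0 : ℝ) < s := by linarith
  by_cases htop : μ {a | F a = ∞} = 0
  · have hae : ∀ᵐ x ∂μ, F x ≠ ∞ := by
      rw [ae_iff]; simpa using htop
    have h1 : ∫⁻ x, F x ^ s ∂μ = ∫⁻ x, ENNReal.ofReal ((F x).toReal ^ s) ∂μ := by
      refine lintegral_congr_ae ?_
      filter_upwards [hae] with x hx
      rw [ENNReal.toReal_rpow, ENNReal.ofReal_toReal (ENNReal.rpow_ne_top_of_nonneg hs0.le hx)]
    rw [h1, lintegral_rpow_eq_lintegral_meas_lt_mul μ
      (Filter.Eventually.of_forall fun x => ENNReal.toReal_nonneg)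
      hF.ennreal_toReal.aemeasurable hs0]
    refine mul_le_mul_right ?_ _
    refine lintegral_mono_ae ?_
    filter_upwards [self_mem_ae_restrict (measurableSet_Ioi : MeasurableSet (Set.Ioi (0:ℝ)))]
      with t ht
    refine mul_le_mul_left ?_ _
    have hsub : {a | t < (F a).toReal} ⊆ {a | ENNReal.ofReal t < F a} ∪ {a | F a = ∞} := by
      intro a ha
      by_cases hFa : F a = ∞
      · exact Or.inr hFa
      · exact Or.inl ((ENNReal.ofReal_lt_iff_lt_toReal (le_of_lt ht) hFa).mpr ha)
    calc μ {a | t < (F a).toReal} ≤ μ ({a | ENNReal.ofReal t < F a} ∪ {a | F a = ∞}) :=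
          measure_mono hsub
      _ ≤ μ {a | ENNReal.ofReal t < F a} + μ {a | F a = ∞} := measure_union_le _ _
      _ = μ {a | ENNReal.ofReal t < F a} := by rw [htop, add_zero]
  · -- RHS is infinite
    have hRHS : ∫⁻ t in Set.Ioi (0 : ℝ),
        μ {a | ENNReal.ofReal t < F a} * ENNReal.ofReal (t ^ (s - 1)) = ∞ := by
      have hmono : ∀ t ∈ Set.Ioi (1 : ℝ),
          μ {a | F a = ∞} * 1 ≤ μ {a | ENNReal.ofReal t < F a} * ENNReal.ofReal (t ^ (s - 1)) := by
        intro t ht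
        have ht1 : (1 : ℝ) < t := ht
        refine mul_le_mul ?_ ?_ zero_le zero_le
        · refine measure_mono fun a ha => ?_
          simp only [Set.mem_setOf_eq] at ha ⊢
          rw [ha]; exact ENNReal.ofReal_lt_top
        · rw [show (1 : ℝ≥0∞) = ENNReal.ofReal 1 by simp]
          exact ENNReal.ofReal_le_ofReal (Real.one_le_rpow ht1.le (by linarith))
      have h2 : (∞ : ℝ≥0∞) ≤ ∫⁻ t in Set.Ioi (1 : ℝ),
          μ {a | ENNReal.ofReal t < F a} * ENNReal.ofReal (t ^ (s - 1)) := by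
        calc (∞ : ℝ≥0∞) = μ {a | F a = ∞} * 1 * volume (Set.Ioi (1 : ℝ)) := by
              rw [Real.volume_Ioi, mul_one, ENNReal.mul_top htop]
          _ = ∫⁻ _ in Set.Ioi (1 : ℝ), μ {a | F a = ∞} * 1 := (setLIntegral_const _ _).symm
          _ ≤ _ := by
              refine lintegral_mono_ae ?_
              filter_upwards [self_mem_ae_restrict
                (measurableSet_Ioi : MeasurableSet (Set.Ioi (1:ℝ)))] with t ht
              exact hmono t ht
      refine top_le_iff.mp (le_trans h2 (lintegral_mono' (Measure.restrict_mono ?_ le_rfl) le_rfl))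
      exact fun t ht => Set.mem_Ioi.mpr (lt_trans one_pos (Set.mem_Ioi.mp ht))
    rw [hRHS, ENNReal.mul_top (by simpa [ENNReal.ofReal_eq_zero, not_le] using hs0)]
    exact le_top

end Frac3

namespace Frac4
open Frac Frac2 Frac3

lemma rpow_sub_one_mul {s : ℝ} (hs : 1 < s) (a : ℝ≥0∞) : a ^ (s - 1) * a = a ^ s := by
  rcases eq_or_ne a 0 with rfl | h0
  · rw [ENNReal.zero_rpow_of_pos (by linarith), ENNReal.zero_rpow_of_pos (by linarith), mul_zero]
  rcases eq_or_ne a ∞ with rfl | htop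
  · rw [ENNReal.top_rpow_of_pos (by linarith), ENNReal.top_rpow_of_pos (by linarith), ENNReal.top_mul_top]
  · nth_rewrite 2 [← ENNReal.rpow_one a]
    rw [← ENNReal.rpow_add _ _ h0 htop, sub_add_cancel]

lemma inner_int {s : ℝ} (hs : 1 < s) (a : ℝ≥0∞) :
    (∫⁻ t in Set.Ioi (0 : ℝ),
      (if ENNReal.ofReal t < a then ENNReal.ofReal (t ^ (s - 2)) else 0))
      ≤ ENNReal.ofReal ((s - 1)⁻¹) * a ^ (s - 1) := by
  rcases eq_or_ne a ∞ with rfl | htop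
  · rw [ENNReal.top_rpow_of_pos (by linarith),
      ENNReal.mul_top (by rw [ne_eq, ENNReal.ofReal_eq_zero, not_le]; exact inv_pos.mpr (by linarith))]
    exact le_top
  set A := a.toReal with hA
  have hcong : (∫⁻ t in Set.Ioi (0 : ℝ),
      (if ENNReal.ofReal t < a then ENNReal.ofReal (t ^ (s - 2)) else 0))
      = ∫⁻ t in Set.Ioi (0 : ℝ),
        Set.indicator (Set.Iio A) (fun t => ENNReal.ofReal (t ^ (s - 2))) t := by
    refine lintegral_congr_ae ?_
    filter_upwards [self_mem_ae_restrict (measurableSet_Ioi : MeasurableSet (Set.Ioi (0:ℝ)))]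
      with t ht
    have : ENNReal.ofReal t < a ↔ t < A :=
      ENNReal.ofReal_lt_iff_lt_toReal (le_of_lt ht) htop
    rw [Set.indicator_apply]
    by_cases h : t < A
    · rw [if_pos (this.mpr h), if_pos (Set.mem_Iio.mpr h)]
    · rw [if_neg (fun hc => h (this.mp hc)), if_neg (fun hc => h (Set.mem_Iio.mp hc))]
  rw [hcong, lintegral_indicator measurableSet_Iio,
    Measure.restrict_restrict measurableSet_Iio, Set.Iio_inter_Ioi]
  rcases le_or_gt A 0 with hA0 | hA0
  · rw [Set.Ioo_eq_empty (not_lt.mpr hA0)]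
    simp
  have hint : IntegrableOn (fun t : ℝ => t ^ (s - 2)) (Set.Ioo 0 A) volume := by
    have := intervalIntegral.intervalIntegrable_rpow' (a := 0) (b := A)
      (by linarith : (-1 : ℝ) < s - 2)
    rw [intervalIntegrable_iff_integrableOn_Ioc_of_le hA0.le] at this
    exact this.mono_set Set.Ioo_subset_Ioc_self
  have heval : (∫ t in Set.Ioo 0 A, t ^ (s - 2)) = A ^ (s - 1) / (s - 1) := by
    rw [← integral_Ioc_eq_integral_Ioo, ← intervalIntegral.integral_of_le hA0.le,
      integral_rpow (Or.inl (by linarith : (-1:ℝ) < s - 2))]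
    rw [Real.zero_rpow (by intro h; rw [show s - 2 + 1 = s - 1 by ring] at h; linarith)]
    rw [show s - 2 + 1 = s - 1 by ring]
    ring
  refine le_of_eq ?_
  calc (∫⁻ t in Set.Ioo 0 A, ENNReal.ofReal (t ^ (s - 2)))
      = ENNReal.ofReal (∫ t in Set.Ioo 0 A, t ^ (s - 2)) := by
        rw [← ofReal_integral_eq_lintegral_ofReal hint]
        filter_upwards [self_mem_ae_restrict (measurableSet_Ioo :
          MeasurableSet (Set.Ioo (0:ℝ) A))] with t ht
        exact Real.rpow_nonneg (le_of_lt ht.1) _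
    _ = ENNReal.ofReal ((s - 1)⁻¹ * A ^ (s - 1)) := by rw [heval, div_eq_inv_mul]
    _ = ENNReal.ofReal ((s - 1)⁻¹) * ENNReal.ofReal (A ^ (s - 1)) := by
        rw [ENNReal.ofReal_mul (inv_nonneg.mpr (by linarith))]
    _ = ENNReal.ofReal ((s - 1)⁻¹) * a ^ (s - 1) := by
        congr 1
        rw [hA, ENNReal.toReal_rpow, ENNReal.ofReal_toReal
          (ENNReal.rpow_ne_top_of_nonneg (by linarith) htop)]

end Frac4

namespace Frac5
open Frac Frac2 Frac3 Frac4

lemma strong {n : ℕ} (hn : 0 < n) {s : ℝ} (hs : 1 < s) :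
    ∃ C : ℝ≥0∞, C ≠ 0 ∧ C ≠ ∞ ∧ ∀ g : En n → ℝ≥0∞, Measurable g →
      (∫⁻ x, (MB 0 g x) ^ s) ≤ C * ∫⁻ y, (g y) ^ s := by
  have hs0 : (0 : ℝ) < s := by linarith
  have h2top : (2 : ℝ≥0∞) ^ (s - 1) ≠ ∞ :=
    (ENNReal.rpow_lt_top_of_nonneg (by linarith) (by norm_num)).ne
  have h2zero : (2 : ℝ≥0∞) ^ (s - 1) ≠ 0 := by
    simp [ENNReal.rpow_eq_zero_iff]
  refine ⟨ENNReal.ofReal s * (ENNReal.ofReal (4 ^ n) * 2) *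
    (ENNReal.ofReal ((s - 1)⁻¹) * (2 : ℝ≥0∞) ^ (s - 1)), ?_, ?_, ?_⟩
  · refine mul_ne_zero (mul_ne_zero ?_ (mul_ne_zero ?_ two_ne_zero)) (mul_ne_zero ?_ h2zero)
    · simpa [ENNReal.ofReal_eq_zero, not_le] using hs0
    · rw [ne_eq, ENNReal.ofReal_eq_zero, not_le]; positivity
    · rw [ne_eq, ENNReal.ofReal_eq_zero, not_le]; exact inv_pos.mpr (by linarith)
  · exact mul_ne_top (mul_ne_top ENNReal.ofReal_ne_top
      (mul_ne_top ENNReal.ofReal_ne_top ENNReal.ofNat_ne_top))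
      (mul_ne_top ENNReal.ofReal_ne_top h2top)
  intro g hg
  set gt : ℝ → En n → ℝ≥0∞ := fun t y => if ENNReal.ofReal t / 2 < g y then g y else 0
    with hgt
  have hgtm : ∀ t, Measurable (gt t) := fun t =>
    Measurable.ite (measurableSet_lt measurable_const hg) hg measurable_const
  -- Step 1: distribution bound
  have step1 : ∀ t : ℝ, 0 < t →
      volume {x : En n | ENNReal.ofReal t < MB 0 g x}
        ≤ ENNReal.ofReal (4 ^ n) * 2 * ((ENNReal.ofReal t)⁻¹ * ∫⁻ y, gt t y) := by
    intro t ht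
    have hl0 : ENNReal.ofReal t / 2 ≠ 0 := by
      rw [ne_eq, ENNReal.div_eq_zero_iff]
      push_neg
      exact ⟨(ENNReal.ofReal_pos.mpr ht).ne', ENNReal.ofNat_ne_top⟩
    have hltop : ENNReal.ofReal t / 2 ≠ ∞ :=
      (ENNReal.div_lt_top ENNReal.ofReal_ne_top two_ne_zero).ne
    have hincl : {x : En n | ENNReal.ofReal t < MB 0 g x}
        ⊆ {x : En n | ENNReal.ofReal t / 2 < MB 0 (gt t) x} := by
      intro x hx
      simp only [Set.mem_setOf_eq] at hx ⊢
      by_contra hcon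
      push_neg at hcon
      have := MB_split hn g hg (ENNReal.ofReal t / 2) x
      have hle : MB 0 g x ≤ ENNReal.ofReal t := by
        calc MB 0 g x ≤ MB 0 (gt t) x + ENNReal.ofReal t / 2 := this
          _ ≤ ENNReal.ofReal t / 2 + ENNReal.ofReal t / 2 := by gcongr
          _ = ENNReal.ofReal t := ENNReal.add_halves _
      exact absurd hx (not_lt.mpr hle)
    calc volume {x : En n | ENNReal.ofReal t < MB 0 g x}
        ≤ volume {x : En n | ENNReal.ofReal t / 2 < MB 0 (gt t) x} := measure_mono hincl
      _ ≤ ENNReal.ofReal (4 ^ n) / (ENNReal.ofReal t / 2) * ∫⁻ y, gt t y :=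
          weak hn (gt t) (hgtm t) hl0 hltop
      _ = ENNReal.ofReal (4 ^ n) * 2 * ((ENNReal.ofReal t)⁻¹ * ∫⁻ y, gt t y) := by
          rw [div_eq_mul_inv, ENNReal.inv_div (Or.inl ENNReal.ofNat_ne_top)
            (Or.inl two_ne_zero), div_eq_mul_inv]
          ring
  -- helper for t powers
  have hts : ∀ t : ℝ, 0 < t →
      (ENNReal.ofReal t)⁻¹ * ENNReal.ofReal (t ^ (s - 1)) = ENNReal.ofReal (t ^ (s - 2)) := by
    intro t ht
    have : t ^ (s - 1) = t * t ^ (s - 2) := by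
      rw [← Real.rpow_one_add' (le_of_lt ht) (by intro h; linarith [h])]
      · congr 1; ring
    rw [this, ENNReal.ofReal_mul (le_of_lt ht), ← mul_assoc,
      ENNReal.inv_mul_cancel (ENNReal.ofReal_pos.mpr ht).ne' ENNReal.ofReal_ne_top, one_mul]
  calc ∫⁻ x, (MB 0 g x) ^ s
      ≤ ENNReal.ofReal s * ∫⁻ t in Set.Ioi (0 : ℝ),
          volume {a : En n | ENNReal.ofReal t < MB 0 g a} * ENNReal.ofReal (t ^ (s - 1)) :=
        layer_le volume (MB 0 g) (measurable_MB 0 g) hs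
    _ ≤ ENNReal.ofReal s * ∫⁻ t in Set.Ioi (0 : ℝ),
          ENNReal.ofReal (4 ^ n) * 2 * (ENNReal.ofReal (t ^ (s - 2)) * ∫⁻ y, gt t y) := by
        refine mul_le_mul_right (lintegral_mono_ae ?_) _
        filter_upwards [self_mem_ae_restrict (measurableSet_Ioi :
          MeasurableSet (Set.Ioi (0:ℝ)))] with t ht
        calc volume {a : En n | ENNReal.ofReal t < MB 0 g a} * ENNReal.ofReal (t ^ (s - 1))
            ≤ ENNReal.ofReal (4 ^ n) * 2 * ((ENNReal.ofReal t)⁻¹ * ∫⁻ y, gt t y)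
                * ENNReal.ofReal (t ^ (s - 1)) := by
              exact mul_le_mul_left (step1 t ht) _
          _ = ENNReal.ofReal (4 ^ n) * 2 *
                (((ENNReal.ofReal t)⁻¹ * ENNReal.ofReal (t ^ (s - 1))) * ∫⁻ y, gt t y) := by
              ring
          _ = ENNReal.ofReal (4 ^ n) * 2 * (ENNReal.ofReal (t ^ (s - 2)) * ∫⁻ y, gt t y) := by
              rw [hts t ht]
    _ = ENNReal.ofReal s * (ENNReal.ofReal (4 ^ n) * 2 *
          ∫⁻ t in Set.Ioi (0 : ℝ), ∫⁻ y, ENNReal.ofReal (t ^ (s - 2)) * gt t y) := by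
        congr 1
        rw [← lintegral_const_mul' _ _ (mul_ne_top ENNReal.ofReal_ne_top ENNReal.ofNat_ne_top)]
        refine lintegral_congr fun t => ?_
        congr 1
        rw [lintegral_const_mul' _ _ ENNReal.ofReal_ne_top]
    _ ≤ ENNReal.ofReal s * (ENNReal.ofReal (4 ^ n) * 2 *
          ∫⁻ y, ENNReal.ofReal ((s - 1)⁻¹) * (2 * g y) ^ (s - 1) * g y) := by
        refine mul_le_mul_right (mul_le_mul_right ?_ _) _
        -- Fubini
        have hswap : (∫⁻ t in Set.Ioi (0 : ℝ), ∫⁻ y, ENNReal.ofReal (t ^ (s - 2)) * gt t y)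
            = ∫⁻ y, ∫⁻ t in Set.Ioi (0 : ℝ), ENNReal.ofReal (t ^ (s - 2)) * gt t y := by
          apply lintegral_lintegral_swap
          apply Measurable.aemeasurable
          have m1 : Measurable fun p : ℝ × En n => ENNReal.ofReal (p.1 ^ (s - 2)) :=
            (((by fun_prop : Measurable fun t : ℝ => t ^ (s - 2))).comp
              measurable_fst).ennreal_ofReal
          have msets : MeasurableSet {p : ℝ × En n | ENNReal.ofReal p.1 / 2 < g p.2} :=
            measurableSet_lt ((ENNReal.measurable_ofReal.comp measurable_fst).div_const 2)
              (hg.comp measurable_snd)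
          exact m1.mul (Measurable.ite msets (hg.comp measurable_snd) measurable_const)
        rw [hswap]
        refine lintegral_mono fun y => ?_
        have hrw : ∀ t : ℝ, ENNReal.ofReal (t ^ (s - 2)) * gt t y
            = (if ENNReal.ofReal t < 2 * g y then ENNReal.ofReal (t ^ (s - 2)) else 0) * g y := by
          intro t
          have hiff : (ENNReal.ofReal t / 2 < g y) ↔ (ENNReal.ofReal t < 2 * g y) := by
            rw [ENNReal.div_lt_iff (Or.inl two_ne_zero) (Or.inl ENNReal.ofNat_ne_top),
              mul_comm]
          rw [hgt]
          simp only
          rw [mul_ite, mul_zero, ite_mul, zero_mul]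
          exact if_congr hiff rfl rfl
        simp_rw [hrw]
        rw [lintegral_mul_const _ (Measurable.ite
          (measurableSet_lt ENNReal.measurable_ofReal measurable_const)
          (((by fun_prop : Measurable fun t : ℝ => t ^ (s - 2))).ennreal_ofReal)
          measurable_const)]
        exact mul_le_mul_left (inner_int hs (2 * g y)) _
    _ ≤ ENNReal.ofReal s * (ENNReal.ofReal (4 ^ n) * 2) *
          (ENNReal.ofReal ((s - 1)⁻¹) * (2 : ℝ≥0∞) ^ (s - 1)) * ∫⁻ y, (g y) ^ s := by
        have hpt : ∀ y, ENNReal.ofReal ((s - 1)⁻¹) * (2 * g y) ^ (s - 1) * g y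
            = (ENNReal.ofReal ((s - 1)⁻¹) * (2 : ℝ≥0∞) ^ (s - 1)) * (g y) ^ s := by
          intro y
          rw [ENNReal.mul_rpow_of_nonneg _ _ (by linarith : (0:ℝ) ≤ s - 1)]
          rw [← rpow_sub_one_mul hs (g y)]
          ring
        simp_rw [hpt]
        rw [lintegral_const_mul' _ _ (mul_ne_top ENNReal.ofReal_ne_top h2top)]
        rw [← mul_assoc]
        exact le_of_eq (by ring)

end Frac5

namespace Frac6
open Frac Frac2 Frac3 Frac4 Frac5

lemma hedberg {n : ℕ} (hn : 0 < n) {δ s : ℝ} (hδ : 0 < δ) (hs : 1 < s)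
    (hθ1 : δ * s / n < 1) (g : En n → ℝ≥0∞) (hg : Measurable g)
    (hKtop : (∫⁻ y, g y ^ s) ^ (1/s) ≠ ∞) (x : En n) :
    MB δ g x ≤ (MB 0 g x) ^ (1 - δ * s / n) *
      ((∫⁻ y, g y ^ s) ^ (1/s)) ^ (δ * s / n) := by
  have hs0 : (0 : ℝ) < s := by linarith
  have hn0 : (0 : ℝ) < n := by exact_mod_cast hn
  set θ := δ * s / n with hθ
  have hθ0 : 0 < θ := by positivity
  set K := (∫⁻ y, g y ^ s) ^ (1/s) with hK
  rcases eq_or_ne K 0 with hK0 | hK0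
  · -- g = 0 a.e.
    have hint0 : (∫⁻ y, g y ^ s) = 0 := by
      by_contra hne
      rw [hK, ENNReal.rpow_eq_zero_iff] at hK0
      rcases hK0 with ⟨h1, _⟩ | ⟨h1, h2⟩
      · exact hne h1
      · have : (0:ℝ) < 1/s := by positivity
        linarith
    have hgae : ∀ᵐ y, g y = 0 := by
      have h1 : ∀ᵐ y, g y ^ s = 0 := (lintegral_eq_zero_iff (by fun_prop)).mp hint0
      filter_upwards [h1] with y hy
      rcases (ENNReal.rpow_eq_zero_iff.mp hy) with ⟨h, _⟩ | ⟨_, h⟩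
      · exact h
      · linarith
    have hMB : MB δ g x = 0 := by
      refine le_antisymm (MB_le fun c t hx => ?_) zero_le
      have : (∫⁻ y in Metric.ball c t, g y) = 0 := by
        rw [lintegral_congr_ae (ae_restrict_of_ae hgae), lintegral_zero]
      rw [this, mul_zero]
    rw [hMB]; exact zero_le
  refine MB_le fun c t hx => ?_
  have ht0 : 0 < t := lt_of_le_of_lt dist_nonneg (mem_ball.mp hx)
  set V := volume (Metric.ball c t) with hV
  have hV0 : V ≠ 0 := (vol_ball_pos hn ht0).ne'
  have hVtop : V ≠ ∞ := measure_ball_lt_top.ne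
  set I := ∫⁻ y in Metric.ball c t, g y with hI
  rcases eq_or_ne I 0 with hI0 | hI0
  · rw [hI0, mul_zero]; exact zero_le
  -- Hölder
  have holder : I ≤ K * V ^ ((s-1)/s) := by
    have hpq : Real.HolderConjugate s (s/(s-1)) :=
      (Real.holderConjugate_iff_eq_conjExponent hs).mpr rfl
    have h2 := ENNReal.lintegral_mul_le_Lp_mul_Lq (volume.restrict (Metric.ball c t)) hpq
      hg.aemeasurable aemeasurable_const (f := g) (g := fun _ => 1)
    simp only [Pi.mul_apply, mul_one] at h2
    refine h2.trans ?_
    have h3 : (∫⁻ y in Metric.ball c t, (1:ℝ≥0∞) ^ (s/(s-1))) ^ (1/(s/(s-1)))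
        = V ^ ((s-1)/s) := by
      simp only [ENNReal.one_rpow]
      rw [setLIntegral_one, one_div, inv_div]
    rw [h3]
    refine mul_le_mul_left ?_ _
    rw [hK]
    exact ENNReal.rpow_le_rpow (setLIntegral_le_lintegral _ _) (by positivity)
  have hW0 : V ^ ((s-1)/s) ≠ 0 := by
    simp only [ne_eq, ENNReal.rpow_eq_zero_iff, not_or, not_and_or]
    constructor
    · exact Or.inl hV0
    · exact Or.inl hVtop
  have hWtop : V ^ ((s-1)/s) ≠ ∞ :=
    ENNReal.rpow_ne_top_of_nonneg (div_nonneg (by linarith) hs0.le) hVtop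
  have hItop : I ≠ ∞ := by
    intro hc
    rw [hc] at holder
    exact absurd holder (by simp [ENNReal.mul_ne_top hKtop hWtop, top_le_iff])
  have hKge : I * (V ^ ((s-1)/s))⁻¹ ≤ K := by
    have h := mul_le_mul_left holder ((V ^ ((s-1)/s))⁻¹)
    rwa [mul_assoc, ENNReal.mul_inv_cancel hW0 hWtop, mul_one] at h
  -- key algebraic identity
  have h1θ : (0:ℝ) ≤ 1 - θ := by linarith
  have key : (V⁻¹ * I) ^ (1 - θ) * (I * (V ^ ((s-1)/s))⁻¹) ^ θ = V ^ (δ/(n:ℝ) - 1) * I := by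
    rw [ENNReal.mul_rpow_of_nonneg _ _ h1θ, ENNReal.mul_rpow_of_nonneg _ _ hθ0.le,
      ENNReal.inv_rpow, ENNReal.inv_rpow, ← ENNReal.rpow_neg, ← ENNReal.rpow_mul,
      ← ENNReal.rpow_neg]
    rw [show (V ^ (-(1-θ)) * I ^ (1-θ)) * (I ^ θ * V ^ (-((s-1)/s*θ)))
        = (I ^ (1-θ) * I ^ θ) * (V ^ (-(1-θ)) * V ^ (-((s-1)/s*θ))) from by ring]
    rw [← ENNReal.rpow_add _ _ hI0 hItop, ← ENNReal.rpow_add _ _ hV0 hVtop]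
    rw [show (1-θ)+θ = (1:ℝ) from by ring, ENNReal.rpow_one]
    rw [show (-(1-θ)) + (-((s-1)/s*θ)) = δ/(n:ℝ) - 1 from by
      rw [hθ]; field_simp; ring]
    ring
  have e1 : (V⁻¹ * I) ^ (1 - θ) ≤ (MB 0 g x) ^ (1 - θ) := by
    refine ENNReal.rpow_le_rpow ?_ h1θ
    have := le_MB (δ := 0) (g := g) hx
    rwa [show ((0:ℝ)/(n:ℝ) - 1) = (-1:ℝ) from by ring, ENNReal.rpow_neg_one] at this
  have e2 : (I * (V ^ ((s-1)/s))⁻¹) ^ θ ≤ K ^ θ := ENNReal.rpow_le_rpow hKge hθ0.le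
  calc V ^ (δ/(n:ℝ) - 1) * I
      = (V⁻¹ * I) ^ (1 - θ) * (I * (V ^ ((s-1)/s))⁻¹) ^ θ := key.symm
    _ ≤ (MB 0 g x) ^ (1 - θ) * K ^ θ := mul_le_mul' e1 e2

end Frac6

namespace Frac7
open Frac Frac2 Frac3 Frac4 Frac5 Frac6

lemma volume_cube {n : ℕ} {c : En n} {s : ℝ} (hs : 0 ≤ s) :
    volume (cube c s) = ENNReal.ofReal (s ^ n) := by
  have hmp := PiLp.volume_preserving_ofLp (Fin n)
  have hset : cube c s = (@WithLp.ofLp 2 (Fin n → ℝ)) ⁻¹'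
      (Set.univ.pi fun i => Set.Icc (c i - s/2) (c i + s/2)) := by
    ext y
    simp only [cube, Set.mem_setOf_eq, Set.mem_preimage, Set.mem_pi, Set.mem_univ,
      forall_true_left, Set.mem_Icc]
    constructor
    · intro h i
      have := abs_le.mp (h i)
      constructor <;> linarith [this.1, this.2]
    · intro h i
      rw [abs_le]
      constructor <;> linarith [(h i).1, (h i).2]
  rw [hset, hmp.measure_preimage (MeasurableSet.univ_pi fun i =>
    measurableSet_Icc).nullMeasurableSet]
  rw [volume_pi_pi]
  have : ∀ i : Fin n, volume (Set.Icc (c i - s/2) (c i + s/2)) = ENNReal.ofReal s := by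
    intro i
    rw [Real.volume_Icc]
    congr 1
    ring
  simp_rw [this]
  rw [Finset.prod_const, Finset.card_univ, Fintype.card_fin, ← ENNReal.ofReal_pow hs]

lemma cube_subset_ball {n : ℕ} (hn : 0 < n) {x c : En n} {s : ℝ} (hs : 0 < s)
    (hx : x ∈ cube c s) : cube c s ⊆ Metric.ball x (s * (n + 1)) := by
  intro y hy
  rw [mem_ball]
  have hsum : ∀ i, (y i - x i) ^ 2 ≤ s ^ 2 := by
    intro i
    have h1 : |y i - x i| ≤ s := by
      have h2 : |y i - c i| ≤ s / 2 := hy i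
      have h3 : |x i - c i| ≤ s / 2 := hx i
      calc |y i - x i| = |(y i - c i) + (c i - x i)| := by ring_nf
        _ ≤ |y i - c i| + |c i - x i| := abs_add_le _ _
        _ ≤ s / 2 + s / 2 :=
            add_le_add h2 (le_trans (le_of_eq (abs_sub_comm _ _)) h3)
        _ = s := by ring
    calc (y i - x i) ^ 2 = |y i - x i| ^ 2 := (sq_abs _).symm
      _ ≤ s ^ 2 := by
          refine pow_le_pow_left₀ (abs_nonneg _) h1 2
  have hdist : dist y x ≤ s * Real.sqrt n := by
    rw [EuclideanSpace.dist_eq]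
    simp_rw [Real.dist_eq, sq_abs]
    have h4 : (∑ i, (y i - x i) ^ 2) ≤ (n : ℝ) * s ^ 2 := by
      calc (∑ i, (y i - x i) ^ 2) ≤ ∑ _i : Fin n, s ^ 2 :=
            Finset.sum_le_sum fun i _ => hsum i
        _ = (n : ℝ) * s ^ 2 := by rw [Finset.sum_const, Finset.card_univ, Fintype.card_fin,
              nsmul_eq_mul]
    calc Real.sqrt (∑ i, (y i - x i) ^ 2) ≤ Real.sqrt ((n : ℝ) * s ^ 2) :=
          Real.sqrt_le_sqrt h4
      _ = s * Real.sqrt n := by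
          rw [Real.sqrt_mul (Nat.cast_nonneg n), Real.sqrt_sq hs.le, mul_comm]
  have hsq : Real.sqrt n ≤ (n : ℝ) := by
    have h5 : (n : ℝ) ≤ (n : ℝ) ^ 2 := by
      have : (1 : ℝ) ≤ (n : ℝ) := by exact_mod_cast hn
      nlinarith
    calc Real.sqrt n ≤ Real.sqrt ((n:ℝ) ^ 2) := Real.sqrt_le_sqrt h5
      _ = (n : ℝ) := Real.sqrt_sq (Nat.cast_nonneg n)
  calc dist y x ≤ s * Real.sqrt n := hdist
    _ ≤ s * n := by nlinarith
    _ < s * (n + 1) := by nlinarith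

end Frac7

namespace Frac8
open Frac Frac2 Frac3 Frac4 Frac5 Frac6 Frac7

lemma mfrac_congr {n : ℕ} {β r : ℝ} {f f' : En n → ℝ}
    (hff' : ∀ᵐ y, f y = f' y) (x : En n) : Mfrac β r f x = Mfrac β r f' x := by
  unfold Mfrac
  refine iSup_congr fun c => iSup_congr fun s => iSup_congr fun _ => ?_
  congr 2
  refine lintegral_congr_ae (ae_restrict_of_ae ?_)
  filter_upwards [hff'] with y hy
  rw [hy]

lemma mfrac_le_MB {n : ℕ} (hn : 0 < n) {β r : ℝ} (hβ : 0 < β) (hr : 1 ≤ r)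
    (hrβ : r * β < n) (f : En n → ℝ) (x : En n) :
    Mfrac β r f x ≤
      (ENNReal.ofReal (((n : ℝ) + 1) ^ n) * volume (Metric.ball (0 : En n) 1))
          ^ ((1 - r * β / n) / r) *
        (MB (r * β) (fun y => (ENNReal.ofReal |f y|) ^ r) x) ^ (1 / r) := by
  have hn0 : (0 : ℝ) < n := by exact_mod_cast hn
  have hr0 : (0 : ℝ) < r := lt_of_lt_of_le zero_lt_one hr
  set κ := ENNReal.ofReal (((n : ℝ) + 1) ^ n) * volume (Metric.ball (0 : En n) 1) with hκ
  have hκ0 : κ ≠ 0 := by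
    refine mul_ne_zero ?_ (measure_ball_pos volume _ one_pos).ne'
    rw [ne_eq, ENNReal.ofReal_eq_zero, not_le]
    positivity
  have hκtop : κ ≠ ∞ := mul_ne_top ENNReal.ofReal_ne_top measure_ball_lt_top.ne
  set e := 1 - r * β / (n : ℝ) with he
  have he0 : 0 < e := by
    rw [he, sub_pos]
    rw [div_lt_one hn0]
    exact hrβ
  set h := fun y => (ENNReal.ofReal |f y|) ^ r with hh
  refine iSup_le fun c => iSup_le fun s => iSup_le fun hcs => ?_
  obtain ⟨hs, hx⟩ := hcs
  set B := Metric.ball x (s * ((n : ℝ) + 1)) with hB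
  have hrad : 0 < s * ((n : ℝ) + 1) := by positivity
  have hVc : volume (cube c s) = ENNReal.ofReal (s ^ n) := volume_cube hs.le
  have hVc0 : volume (cube c s) ≠ 0 := by
    rw [hVc, ne_eq, ENNReal.ofReal_eq_zero, not_le]; positivity
  have hVctop : volume (cube c s) ≠ ∞ := by rw [hVc]; exact ENNReal.ofReal_ne_top
  have hVb : volume B = volume (cube c s) * κ := by
    rw [hB, vol_ball hn x hrad.le, hVc, hκ, mul_pow, ENNReal.ofReal_mul (by positivity),
      mul_assoc]
  have hVb0 : volume B ≠ 0 := by rw [hVb]; exact mul_ne_zero hVc0 hκ0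
  have hVbtop : volume B ≠ ∞ := by rw [hVb]; exact mul_ne_top hVctop hκtop
  have hsub : cube c s ⊆ B := cube_subset_ball hn hs hx
  have hxB : x ∈ B := Metric.mem_ball_self hrad
  -- key exponent identity
  have hkey : ((volume (cube c s)) ^ e)⁻¹ = κ ^ e * (volume B) ^ (r * β / (n : ℝ) - 1) := by
    have h1 : (volume B) ^ (r * β / (n : ℝ) - 1) = ((volume B) ^ e)⁻¹ := by
      rw [show r * β / (n : ℝ) - 1 = -e from by rw [he]; ring, ENNReal.rpow_neg]
    have hκe0 : κ ^ e ≠ 0 := by simp [ENNReal.rpow_eq_zero_iff, hκ0, hκtop, not_or]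
    have hκet : κ ^ e ≠ ∞ := ENNReal.rpow_ne_top_of_nonneg he0.le hκtop
    have hVce0 : (volume (cube c s)) ^ e ≠ 0 := by
      simp [ENNReal.rpow_eq_zero_iff, hVc0, hVctop, not_or]
    have hVcet : (volume (cube c s)) ^ e ≠ ∞ :=
      ENNReal.rpow_ne_top_of_nonneg he0.le hVctop
    have h2 : ((volume (cube c s) * κ) ^ e) = (volume (cube c s)) ^ e * κ ^ e :=
      ENNReal.mul_rpow_of_nonneg _ _ he0.le
    rw [h1, hVb, h2, ENNReal.mul_inv (Or.inl hVce0) (Or.inl hVcet),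
      mul_comm (((volume (cube c s)) ^ e)⁻¹) ((κ ^ e)⁻¹), ← mul_assoc,
      ENNReal.mul_inv_cancel hκe0 hκet, one_mul]
  calc (((volume (cube c s)) ^ (1 - r * β / (n:ℝ)))⁻¹ *
        ∫⁻ y in cube c s, (ENNReal.ofReal |f y|) ^ r) ^ (1 / r)
      ≤ (((volume (cube c s)) ^ e)⁻¹ * ∫⁻ y in B, h y) ^ (1 / r) := by
        refine ENNReal.rpow_le_rpow ?_ (by positivity)
        rw [← he]
        exact mul_le_mul_right (lintegral_mono_set hsub) _
    _ = (κ ^ e * ((volume B) ^ (r * β / (n : ℝ) - 1) * ∫⁻ y in B, h y)) ^ (1 / r) := by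
        rw [hkey, mul_assoc]
    _ ≤ (κ ^ e * MB (r * β) h x) ^ (1 / r) := by
        refine ENNReal.rpow_le_rpow (mul_le_mul_right ?_ _) (by positivity)
        exact le_MB hxB
    _ = κ ^ (e / r) * (MB (r * β) h x) ^ (1 / r) := by
        rw [ENNReal.mul_rpow_of_nonneg _ _ (by positivity : (0:ℝ) ≤ 1/r),
          ← ENNReal.rpow_mul]
        congr 1
        rw [mul_one_div]

end Frac8

namespace Final
open Frac Frac2 Frac3 Frac4 Frac5 Frac6 Frac7 Frac8

theorem stmt11 {n : ℕ} (hn : 0 < n)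
    (β r p q : ℝ) (hβ0 : 0 < β) (hβn : β < n)
    (hr : 1 ≤ r) (hrp : r < p) (hpn : β * p < n)
    (hq : 1 / q = 1 / p - β / n) :
    ∃ C : ℝ, ∀ f : En n → ℝ, MemLp f (ENNReal.ofReal p) volume →
      (∫⁻ x, (Mfrac β r f x) ^ q) ^ (1 / q) ≤
        ENNReal.ofReal C * eLpNorm f (ENNReal.ofReal p) volume := by
  have hn0 : (0 : ℝ) < n := by exact_mod_cast hn
  have hr0 : (0 : ℝ) < r := lt_of_lt_of_le zero_lt_one hr
  have hp0 : (0 : ℝ) < p := lt_trans hr0 hrp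
  have hq0 : (0 : ℝ) < q := by
    have h1 : (0 : ℝ) < 1 / q := by
      rw [hq, sub_pos, div_lt_div_iff₀ hn0 hp0]
      nlinarith
    exact one_div_pos.mp h1
  have hs : 1 < p / r := (one_lt_div hr0).mpr hrp
  have hδ0 : 0 < r * β := by positivity
  have hδn : r * β < n := by nlinarith
  have hθ1 : r * β * (p / r) / (n : ℝ) < 1 := by
    rw [div_lt_one hn0]
    have : r * β * (p / r) = β * p := by field_simp
    rw [this]; exact hpn
  have hθ0 : 0 < r * β * (p / r) / (n : ℝ) := by positivity
  -- exponent identities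
  have hrs : r * (p / r) = p := by field_simp
  have hqn : q * ((n : ℝ) - β * p) = p * n := by
    have hqne : q ≠ 0 := hq0.ne'
    field_simp at hq
    linarith
  have hkey2 : (1 - r * β * (p / r) / (n : ℝ)) * (1 / r * q) = p / r := by
    have h1 : r * β * (p / r) = β * p := by field_simp
    rw [h1]
    field_simp
    ring_nf
    nlinarith [hqn, sq_nonneg p]
  have hkey3 : (1 / (p / r) * (r * β * (p / r) / (n : ℝ) * (1 / r * q)) + 1) * (1 / q)
      = 1 / p := by
    have h1 : r * β * (p / r) = β * p := by field_simp
    rw [h1]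
    field_simp
    ring_nf
    linear_combination (-1 : ℝ) * hqn
  obtain ⟨C, hC0, hCtop, hCs⟩ := strong hn (s := p / r) hs
  set κe := (ENNReal.ofReal (((n : ℝ) + 1) ^ n) * volume (Metric.ball (0 : En n) 1))
    ^ ((1 - r * β / n) / r) with hκe
  have hκetop : κe ≠ ∞ := by
    refine ENNReal.rpow_ne_top_of_nonneg ?_
      (mul_ne_top ENNReal.ofReal_ne_top measure_ball_lt_top.ne)
    have : r * β / n < 1 := by rw [div_lt_one hn0]; exact hδn
    have : 0 ≤ 1 - r * β / n := by linarith
    positivity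
  set C0 := κe * C ^ (1 / q) with hC0def
  have hC0top : C0 ≠ ∞ :=
    mul_ne_top hκetop (ENNReal.rpow_ne_top_of_nonneg (by positivity) hCtop)
  refine ⟨C0.toReal, fun f hf => ?_⟩
  rw [ENNReal.ofReal_toReal hC0top]
  -- measurable representative
  have hfm := hf.1
  set f' := hfm.mk f with hf'def
  have hf'm : Measurable f' := hfm.stronglyMeasurable_mk.measurable
  have hff' : f =ᵐ[volume] f' := hfm.ae_eq_mk
  set h : En n → ℝ≥0∞ := fun y => (ENNReal.ofReal |f' y|) ^ r with hh
  have hhm : Measurable h := by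
    rw [hh]
    fun_prop
  set P := ∫⁻ y, (ENNReal.ofReal |f' y|) ^ p with hP
  have hhs : ∀ y, h y ^ (p / r) = (ENNReal.ofReal |f' y|) ^ p := by
    intro y
    rw [hh]
    simp only
    rw [← ENNReal.rpow_mul, hrs]
  have hPs : (∫⁻ y, h y ^ (p / r)) = P := by
    rw [hP]; exact lintegral_congr fun y => hhs y
  have hsnorm : eLpNorm f (ENNReal.ofReal p) volume = P ^ (1 / p) := by
    rw [eLpNorm_congr_ae hff', eLpNorm_eq_lintegral_rpow_enorm_toReal
      (by simp [ENNReal.ofReal_eq_zero, not_le, hp0] : ENNReal.ofReal p ≠ 0)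
      ENNReal.ofReal_ne_top, ENNReal.toReal_ofReal hp0.le]
    congr 1
    refine lintegral_congr fun y => ?_
    rw [Real.enorm_eq_ofReal_abs]
  have hPtop : P ≠ ∞ := by
    intro hcon
    have h2 := hf.2
    rw [hsnorm, hcon, ENNReal.top_rpow_of_pos (by positivity : (0:ℝ) < 1/p)] at h2
    exact absurd h2 (lt_irrefl _)
  have hKtop : P ^ (1 / (p / r)) ≠ ∞ :=
    ENNReal.rpow_ne_top_of_nonneg (by positivity) hPtop
  -- pointwise bound
  have hpt : ∀ x, (Mfrac β r f x) ^ q ≤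
      (κe ^ q * (P ^ (1 / (p / r))) ^ (r * β * (p / r) / (n : ℝ) * (1 / r * q)))
        * (MB 0 h x) ^ (p / r) := by
    intro x
    have h1 : Mfrac β r f x = Mfrac β r f' x := mfrac_congr hff' x
    have h2 : Mfrac β r f' x ≤ κe * (MB (r * β) h x) ^ (1 / r) :=
      mfrac_le_MB hn hβ0 hr hδn f' x
    have h3 : MB (r * β) h x ≤ (MB 0 h x) ^ (1 - r * β * (p / r) / (n : ℝ))
        * (P ^ (1 / (p / r))) ^ (r * β * (p / r) / (n : ℝ)) := by
      have h4 := hedberg hn hδ0 hs hθ1 h hhm (by rw [hPs]; exact hKtop) x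
      rwa [hPs] at h4
    calc (Mfrac β r f x) ^ q = (Mfrac β r f' x) ^ q := by rw [h1]
      _ ≤ (κe * (MB (r * β) h x) ^ (1 / r)) ^ q := ENNReal.rpow_le_rpow h2 hq0.le
      _ ≤ (κe * (((MB 0 h x) ^ (1 - r * β * (p / r) / (n : ℝ))
            * (P ^ (1 / (p / r))) ^ (r * β * (p / r) / (n : ℝ))) ^ (1 / r))) ^ q :=
          ENNReal.rpow_le_rpow
            (mul_le_mul_right (ENNReal.rpow_le_rpow h3 (by positivity)) _) hq0.le
      _ = (κe ^ q * (P ^ (1 / (p / r))) ^ (r * β * (p / r) / (n : ℝ) * (1 / r * q)))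
            * (MB 0 h x) ^ (p / r) := by
          have e1 : ∀ X : ℝ≥0∞, (X ^ ((1:ℝ)/r)) ^ q = X ^ (1/r * q) := fun X =>
            (ENNReal.rpow_mul X (1/r) q).symm
          rw [ENNReal.mul_rpow_of_nonneg _ _ hq0.le, e1,
            ENNReal.mul_rpow_of_nonneg _ _ (by positivity : (0:ℝ) ≤ 1 / r * q),
            ← ENNReal.rpow_mul (MB 0 h x),
            ← ENNReal.rpow_mul (P ^ (1 / (p / r))), hkey2]
          ring
  -- integrate and conclude
  have hconst_top : (κe ^ q * (P ^ (1 / (p / r))) ^ (r * β * (p / r) / (n : ℝ) * (1 / r * q)))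
      ≠ ∞ := mul_ne_top (ENNReal.rpow_ne_top_of_nonneg hq0.le hκetop)
      (ENNReal.rpow_ne_top_of_nonneg (by positivity) hKtop)
  calc (∫⁻ x, (Mfrac β r f x) ^ q) ^ (1 / q)
      ≤ ((κe ^ q * (P ^ (1 / (p / r))) ^ (r * β * (p / r) / (n : ℝ) * (1 / r * q)))
          * (C * P)) ^ (1 / q) := by
        refine ENNReal.rpow_le_rpow ?_ (by positivity)
        calc ∫⁻ x, (Mfrac β r f x) ^ q
            ≤ ∫⁻ x, (κe ^ q * (P ^ (1 / (p / r)))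
                ^ (r * β * (p / r) / (n : ℝ) * (1 / r * q))) * (MB 0 h x) ^ (p / r) :=
              lintegral_mono hpt
          _ = (κe ^ q * (P ^ (1 / (p / r))) ^ (r * β * (p / r) / (n : ℝ) * (1 / r * q)))
                * ∫⁻ x, (MB 0 h x) ^ (p / r) := lintegral_const_mul' _ _ hconst_top
          _ ≤ _ := by
              refine mul_le_mul_right ?_ _
              have h5 := hCs h hhm
              rwa [hPs] at h5
    _ = C0 * P ^ (1 / p) := by
        set wc := r * β * (p / r) / (n : ℝ) * (1 / r * q) with hwc
        have g1 : (P ^ (1 / (p / r))) ^ wc = P ^ (1 / (p / r) * wc) :=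
          (ENNReal.rpow_mul P _ _).symm
        have g2 : P ^ (1 / (p / r) * wc + 1) = P ^ (1 / (p / r) * wc) * P := by
          rw [ENNReal.rpow_add_of_nonneg _ _ (by positivity) zero_le_one, ENNReal.rpow_one]
        rw [g1, show κe ^ q * P ^ (1 / (p / r) * wc) * (C * P)
            = (κe ^ q * C) * (P ^ (1 / (p / r) * wc) * P) from by ring, ← g2]
        rw [ENNReal.mul_rpow_of_nonneg _ _ (by positivity : (0:ℝ) ≤ 1/q),
          ENNReal.mul_rpow_of_nonneg _ _ (by positivity : (0:ℝ) ≤ 1/q),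
          ← ENNReal.rpow_mul κe q (1/q),
          ← ENNReal.rpow_mul P (1 / (p / r) * wc + 1) (1/q), hkey3,
          mul_one_div_cancel hq0.ne', ENNReal.rpow_one, hC0def]
    _ = C0 * eLpNorm f (ENNReal.ofReal p) volume := by rw [hsnorm]

end Final

end AuxFrac

/-- Lemma 4, Chanillo. `L^p → L^q` boundedness of the fractional
maximal operator `M_{β,r}` for `1 ≤ r < p < n/β`, `1/q = 1/p − β/n`. -/
theorem stmt11 {n : ℕ} (hn : 0 < n)
    (β r p q : ℝ) (hβ0 : 0 < β) (hβn : β < n)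
    (hr : 1 ≤ r) (hrp : r < p) (hpn : β * p < n)
    (hq : 1 / q = 1 / p - β / n) :
    ∃ C : ℝ, ∀ f : En n → ℝ, MemLp f (ENNReal.ofReal p) volume →
      (∫⁻ x, (Mfrac β r f x) ^ q) ^ (1 / q) ≤
        ENNReal.ofReal C * eLpNorm f (ENNReal.ofReal p) volume := by
  exact Final.stmt11 hn β r p q hβ0 hβn hr hrp hpn hq

end
end

section
/- Suppose 1 ≤ r < ∞, 0 < β ≤ 1 and b ∈ Lip_β(R^n). Then there is a constant C such that for every cube Q with sides parallel to the axes, every point x ∈ Q, and every locally r-integrable f, ‖(b − b_Q) f χ_{2Q}‖_{L^r} ≤ C |Q|^{1/r} ‖b‖_{Lip_β} M_{β,r}(f)(x), where χ_{2Q} is the indicator of the doubled cube 2Q and b_Q = |Q|^{−1} ∫_Q b. -/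
open MeasureTheory ENNReal

noncomputable section

-- Auxiliary lemmas

lemma cube_eq {n : ℕ} (c : En n) (s : ℝ) :
    cube c s = (MeasurableEquiv.toLp 2 (Fin n → ℝ)).symm ⁻¹'
      (Set.univ.pi fun i => Set.Icc (c i - s/2) (c i + s/2)) := by
  ext y
  have he : ∀ i, (MeasurableEquiv.toLp 2 (Fin n → ℝ)).symm y i = y i := fun i => rfl
  simp only [cube, Set.mem_setOf_eq, Set.mem_preimage, Set.mem_pi, Set.mem_univ,
    forall_true_left, Set.mem_Icc, he]
  constructor
  · intro h i
    have := abs_le.1 (h i); constructor <;> [linarith [this.1]; linarith [this.2]]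
  · intro h i
    have := h i
    rw [abs_le]; constructor <;> [linarith [this.1]; linarith [this.2]]

lemma measurableSet_cube {n : ℕ} (c : En n) (s : ℝ) : MeasurableSet (cube c s) := by
  rw [cube_eq]
  exact (MeasurableEquiv.measurable _) (MeasurableSet.univ_pi fun i => measurableSet_Icc)

lemma volume_cube {n : ℕ} (c : En n) {s : ℝ} (hs : 0 ≤ s) :
    volume (cube c s) = ENNReal.ofReal (s ^ n) := by
  rw [cube_eq, (EuclideanSpace.volume_preserving_symm_measurableEquiv_toLp (Fin n)).measure_preimage
    ((MeasurableSet.univ_pi fun i => measurableSet_Icc).nullMeasurableSet)]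
  rw [volume_pi_pi]
  have : ∀ i : Fin n, volume (Set.Icc (c i - s/2) (c i + s/2)) = ENNReal.ofReal s := by
    intro i; rw [Real.volume_Icc]; congr 1; ring
  simp only [this, Finset.prod_const, Finset.card_univ, Fintype.card_fin]
  exact (ENNReal.ofReal_pow hs n).symm

lemma norm_sub_le_cube {n : ℕ} {c y z : En n} {s₁ s₂ : ℝ} (h1 : 0 ≤ s₁) (h2 : 0 ≤ s₂)
    (hy : y ∈ cube c s₁) (hz : z ∈ cube c s₂) :
    ‖y - z‖ ≤ Real.sqrt n * ((s₁ + s₂) / 2) := by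
  have key : ∀ i, |y i - z i| ≤ (s₁ + s₂) / 2 := by
    intro i
    calc |y i - z i| ≤ |y i - c i| + |c i - z i| := abs_sub_le _ _ _
    _ ≤ s₁/2 + s₂/2 := add_le_add (hy i) (by rw [abs_sub_comm]; exact hz i)
    _ = (s₁ + s₂)/2 := by ring
  have ht : (0:ℝ) ≤ (s₁ + s₂) / 2 := by linarith
  rw [EuclideanSpace.norm_eq]
  calc Real.sqrt (∑ i, ‖(y - z) i‖ ^ 2) ≤ Real.sqrt (∑ _i : Fin n, ((s₁+s₂)/2) ^ 2) := by
        apply Real.sqrt_le_sqrt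
        apply Finset.sum_le_sum
        intro i _
        have : ‖(y - z) i‖ = |y i - z i| := by
          simp [PiLp.sub_apply, Real.norm_eq_abs]
        rw [this]
        exact pow_le_pow_left₀ (abs_nonneg _) (key i) 2
    _ = Real.sqrt n * ((s₁+s₂)/2) := by
        rw [Finset.sum_const, Finset.card_univ, Fintype.card_fin, nsmul_eq_mul,
          Real.sqrt_mul (by positivity), Real.sqrt_sq ht]

lemma isCompact_cube {n : ℕ} (c : En n) {s : ℝ} (hs : 0 ≤ s) : IsCompact (cube c s) := by
  have hclosed : IsClosed (cube c s) := by
    have : cube c s = ⋂ i, (fun y : En n => |y i - c i|) ⁻¹' Set.Iic (s/2) := by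
      ext y; simp [cube, Set.mem_iInter]
    rw [this]
    exact isClosed_iInter fun i => IsClosed.preimage
      (((EuclideanSpace.proj (𝕜 := ℝ) i).continuous.sub continuous_const).abs) isClosed_Iic
  have hsub : cube c s ⊆ Metric.closedBall c (Real.sqrt n * (s/2)) := by
    intro y hy
    have hc : c ∈ cube c 0 := by intro i; simp
    have := norm_sub_le_cube hs le_rfl hy hc
    simpa [Metric.mem_closedBall, dist_eq_norm] using this.trans (le_of_eq (by ring))
  exact (isCompact_closedBall c _).of_isClosed_subset hclosed hsub

lemma continuous_of_lipBound {n : ℕ} {β : ℝ} {b : En n → ℝ} {L : ℝ} (hβ : 0 < β) (hL : 0 ≤ L)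
    (hb : LipBound β b L) : Continuous b := by
  have h : HolderWith L.toNNReal ⟨β, hβ.le⟩ b := by
    intro x y
    rw [edist_dist, edist_dist]
    calc ENNReal.ofReal (dist (b x) (b y))
        ≤ ENNReal.ofReal (L * dist x y ^ β) := by
          apply ENNReal.ofReal_le_ofReal
          rw [Real.dist_eq, dist_eq_norm]; exact hb x y
      _ = ENNReal.ofReal L * ENNReal.ofReal (dist x y ^ β) := by
          rw [ENNReal.ofReal_mul hL]
      _ = ↑L.toNNReal * ENNReal.ofReal (dist x y) ^ ((⟨β, hβ.le⟩ : NNReal) : ℝ) := by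
          rw [ENNReal.ofReal_rpow_of_nonneg dist_nonneg hβ.le]; rfl
  exact h.continuous (by exact_mod_cast hβ)

lemma abs_sub_cubeAvg_le {n : ℕ} {β : ℝ} {b : En n → ℝ} {L : ℝ} (hβ : 0 < β) (hL : 0 ≤ L)
    (hb : LipBound β b L) (c : En n) {s : ℝ} (hs : 0 < s) {y : En n} (hy : y ∈ cube c (2 * s)) :
    |b y - cubeAvg b c s| ≤ L * (Real.sqrt n * (3 * s / 2)) ^ β := by
  set M := L * (Real.sqrt n * (3 * s / 2)) ^ β with hM
  have hM0 : 0 ≤ M := by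
    apply mul_nonneg hL
    apply Real.rpow_nonneg
    positivity
  have hV : volume (cube c s) = ENNReal.ofReal (s ^ n) := volume_cube c hs.le
  have hVfin : volume (cube c s) < ⊤ := by rw [hV]; exact ENNReal.ofReal_lt_top
  set V := (volume (cube c s)).toReal with hVdef
  have hVpos : 0 < V := by
    rw [hVdef, hV, ENNReal.toReal_ofReal (by positivity)]
    positivity
  have hcont : Continuous b := continuous_of_lipBound hβ hL hb
  have hint : IntegrableOn b (cube c s) volume :=
    hcont.continuousOn.integrableOn_compact (isCompact_cube c hs.le)
  have hbound : ∀ z ∈ cube c s, ‖b y - b z‖ ≤ M := by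
    intro z hz
    rw [Real.norm_eq_abs]
    refine (hb y z).trans ?_
    rw [hM]
    apply mul_le_mul_of_nonneg_left _ hL
    apply Real.rpow_le_rpow (norm_nonneg _) _ hβ.le
    have := norm_sub_le_cube (by linarith) hs.le hy hz
    calc ‖y - z‖ ≤ Real.sqrt n * ((2 * s + s) / 2) := this
      _ = Real.sqrt n * (3 * s / 2) := by ring
  have key : b y - cubeAvg b c s = V⁻¹ * ∫ z in cube c s, (b y - b z) := by
    rw [integral_sub (integrableOn_const (C := b y) hVfin.ne) hint, setIntegral_const, measureReal_def,
      smul_eq_mul, cubeAvg, ← hVdef]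
    field_simp
  rw [key, abs_mul, abs_inv, abs_of_pos hVpos]
  have hIb : ‖∫ z in cube c s, (b y - b z)‖ ≤ M * V :=
    norm_setIntegral_le_of_norm_le_const hVfin hbound
  rw [Real.norm_eq_abs] at hIb
  calc V⁻¹ * |∫ z in cube c s, (b y - b z)| ≤ V⁻¹ * (M * V) := by
        apply mul_le_mul_of_nonneg_left hIb (by positivity)
    _ = M := by field_simp

lemma pow_arith {N r β s : ℝ} (hN : 0 < N) (hr : 1 ≤ r) (hs : 0 < s) :
    (s ^ N) ^ (1/r) * ((((2*s) ^ N) ^ (1 - r*β/N))⁻¹) ^ (1/r) = 2 ^ (β - N/r) * s ^ β := by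
  have hr0 : (0:ℝ) < r := lt_of_lt_of_le one_pos hr
  have h2s : (0:ℝ) < 2 * s := by linarith
  rw [← Real.rpow_mul hs.le, ← Real.rpow_mul h2s.le, ← Real.rpow_neg h2s.le,
    ← Real.rpow_mul h2s.le, Real.mul_rpow (by norm_num) hs.le]
  rw [show -(N*(1 - r*β/N))*(1/r) = β - N/r by field_simp; ring]
  rw [show N*(1/r) = N/r by ring]
  rw [mul_left_comm, ← Real.rpow_add hs, show N/r + (β - N/r) = β by ring]


/-- Lemma 5. For `b ∈ Lip_β`:
`‖(b − b_Q) f χ_{2Q}‖_{L^r} ≤ C |Q|^{1/r} ‖b‖_{Lip_β} M_{β,r}(f)(x)` for `x ∈ Q`. -/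
theorem stmt12 {n : ℕ} (hn : 0 < n)
    (r β : ℝ) (hr : 1 ≤ r) (hβ0 : 0 < β) (hβ1 : β ≤ 1) (hβn : β < n)
    (b : En n → ℝ) (L : ℝ) (hb : LipBound β b L) :
    ∃ C : ℝ, ∀ (c : En n) (s : ℝ), 0 < s → ∀ x ∈ cube c s,
      ∀ f : En n → ℝ, Measurable f →
        -- `f` is locally `r`-integrable
        (∀ Kc : Set (En n), IsCompact Kc → ∫⁻ y in Kc, ENNReal.ofReal (|f y| ^ r) ≠ ⊤) →
        eLpNorm ((cube c (2 * s)).indicator fun y => (b y - cubeAvg b c s) * f y)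
            (ENNReal.ofReal r) volume ≤
          ENNReal.ofReal (C * L) * (volume (cube c s)) ^ (1 / r) * Mfrac β r f x := by
  classical
  have hL : 0 ≤ L := by
    have h1 : ‖(EuclideanSpace.single (⟨0, hn⟩ : Fin n) (1:ℝ)) - 0‖ = 1 := by simp
    have h2 := hb (EuclideanSpace.single (⟨0, hn⟩ : Fin n) 1) 0
    rw [h1, Real.one_rpow, mul_one] at h2
    exact le_trans (abs_nonneg _) h2
  refine ⟨(Real.sqrt n * (3/2)) ^ β * 2 ^ ((n:ℝ)/r - β), ?_⟩
  intro c s hs x hx f hfm hloc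
  have hr0 : (0:ℝ) < r := one_pos.trans_le hr
  have h2s : (0:ℝ) < 2 * s := by linarith
  set A : ℝ := (Real.sqrt n * (3/2)) ^ β with hA
  have hA0 : 0 ≤ A := Real.rpow_nonneg (by positivity) _
  set M : ℝ := L * (Real.sqrt n * (3*s/2)) ^ β with hMdef
  have hM0 : 0 ≤ M := mul_nonneg hL (Real.rpow_nonneg (by positivity) _)
  set I : ℝ≥0∞ := ∫⁻ y in cube c (2*s), (ENNReal.ofReal |f y|) ^ r with hI
  have hp0 : (ENNReal.ofReal r) ≠ 0 := by
    simp only [ne_eq, ENNReal.ofReal_eq_zero, not_le]; linarith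
  have hptop : (ENNReal.ofReal r) ≠ ⊤ := ENNReal.ofReal_ne_top
  have hpr : (ENNReal.ofReal r).toReal = r := ENNReal.toReal_ofReal hr0.le
  -- Step 1
  have step1 : eLpNorm ((cube c (2*s)).indicator fun y => (b y - cubeAvg b c s) * f y)
      (ENNReal.ofReal r) volume ≤ ENNReal.ofReal M * I ^ (1/r) := by
    rw [eLpNorm_eq_lintegral_rpow_enorm_toReal hp0 hptop, hpr]
    have heq : ∀ y, ((‖(cube c (2*s)).indicator (fun y => (b y - cubeAvg b c s) * f y) y‖ₑ : ℝ≥0∞)) ^ r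
        = (cube c (2*s)).indicator (fun y => (ENNReal.ofReal |(b y - cubeAvg b c s) * f y|) ^ r) y := by
      intro y
      by_cases hy : y ∈ cube c (2*s)
      · simp only [Set.indicator_of_mem hy, Real.enorm_eq_ofReal_abs]
      · simp [Set.indicator_of_notMem hy, ENNReal.zero_rpow_of_pos hr0]
    simp_rw [heq]
    rw [lintegral_indicator (measurableSet_cube c (2*s))]
    have hbd : ∫⁻ y in cube c (2*s), (ENNReal.ofReal |(b y - cubeAvg b c s) * f y|) ^ r
        ≤ (ENNReal.ofReal M) ^ r * I := by
      rw [hI, ← lintegral_const_mul' _ _ (ENNReal.rpow_ne_top_of_nonneg hr0.le ENNReal.ofReal_ne_top)]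
      apply setLIntegral_mono' (measurableSet_cube c (2*s))
      intro y hy
      rw [abs_mul, ENNReal.ofReal_mul (abs_nonneg _),
        ENNReal.mul_rpow_of_nonneg _ _ hr0.le]
      apply mul_le_mul_left
      apply ENNReal.rpow_le_rpow _ hr0.le
      exact ENNReal.ofReal_le_ofReal (abs_sub_cubeAvg_le hβ0 hL hb c hs hy)
    calc (∫⁻ y in cube c (2*s), (ENNReal.ofReal |(b y - cubeAvg b c s) * f y|) ^ r) ^ (1/r)
        ≤ ((ENNReal.ofReal M) ^ r * I) ^ (1/r) := ENNReal.rpow_le_rpow hbd (by positivity)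
      _ = ENNReal.ofReal M * I ^ (1/r) := by
          rw [ENNReal.mul_rpow_of_nonneg _ _ (by positivity : (0:ℝ) ≤ 1/r),
            ← ENNReal.rpow_mul, mul_one_div, div_self hr0.ne', ENNReal.rpow_one]
  -- Step 2 : Mfrac lower bound
  have hx2 : x ∈ cube c (2*s) := fun i => le_trans (hx i) (by linarith)
  have step2 : (((volume (cube c (2*s))) ^ (1 - r*β/(n:ℝ)))⁻¹ * I) ^ (1/r) ≤ Mfrac β r f x := by
    rw [Mfrac]
    exact le_iSup_of_le c (le_iSup_of_le (2*s) (le_iSup_of_le ⟨h2s, hx2⟩ le_rfl))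
  refine step1.trans (le_trans ?_ (mul_le_mul_right step2 _))
  -- scalar inequality times I^(1/r)
  rw [ENNReal.mul_rpow_of_nonneg _ _ (by positivity : (0:ℝ) ≤ 1/r), ← mul_assoc]
  apply mul_le_mul_left
  -- now : ofReal M ≤ ofReal (C * L) * (vol Q)^(1/r) * ((vol 2Q ^ (1-rβ/n))⁻¹)^(1/r)
  rw [volume_cube c hs.le, volume_cube c h2s.le]
  have hsn : (0:ℝ) < s ^ n := by positivity
  have h2sn : (0:ℝ) < (2*s) ^ n := by positivity
  rw [ENNReal.ofReal_rpow_of_pos hsn, ENNReal.ofReal_rpow_of_pos h2sn,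
    ← ENNReal.ofReal_inv_of_pos (Real.rpow_pos_of_pos h2sn _),
    ENNReal.ofReal_rpow_of_pos (by positivity), ← ENNReal.ofReal_mul (by positivity),
    ← ENNReal.ofReal_mul (by positivity)]
  apply ENNReal.ofReal_le_ofReal
  have hnn : (0:ℝ) < (n:ℝ) := by exact_mod_cast hn
  have harith := pow_arith (N := (n:ℝ)) (r := r) (β := β) hnn hr hs
  rw [← Real.rpow_natCast s n, ← Real.rpow_natCast (2*s) n, mul_assoc, harith]
  have e2 : (2:ℝ) ^ ((n:ℝ)/r - β) * 2 ^ (β - (n:ℝ)/r) = 1 := by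
    rw [← Real.rpow_add (by norm_num)]
    norm_num
  have hsplit : (Real.sqrt n * (3*s/2)) ^ β = A * s ^ β := by
    rw [hA, ← Real.mul_rpow (by positivity) hs.le]
    congr 1
    ring
  rw [hMdef, hsplit]
  calc L * (A * s ^ β) = A * 2 ^ ((n:ℝ)/r - β) * L * (2 ^ (β - (n:ℝ)/r) * s ^ β) := by
        rw [show A * 2 ^ ((n:ℝ)/r - β) * L * (2 ^ (β - (n:ℝ)/r) * s ^ β)
            = (2 ^ ((n:ℝ)/r - β) * 2 ^ (β - (n:ℝ)/r)) * (L * (A * s ^ β)) by ring, e2, one_mul]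
    _ ≤ A * 2 ^ ((n:ℝ)/r - β) * L * (2 ^ (β - (n:ℝ)/r) * s ^ β) := le_rfl


end
end
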